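/- For every finite nonempty set X and all elements a, b, c, d, e, f, g of R(X,3), ternary intermolecular recombination satisfies the identity P: ⟦⟦⟦a,c,f⟧,e,g⟧,b,d⟧ − ⟦⟦⟦a,c,g⟧,e,f⟧,b,d⟧ − ⟦⟦⟦c,e,f⟧,a,g⟧,b,d⟧ + ⟦⟦⟦c,e,g⟧,a,f⟧,b,d⟧ = 0. -/

import Mathlib

open scoped BigOperators

/-- The tensor-like product of finitely supported functions. -/
noncomputable def tensorPi {n : ℕ} {B : Type*} (f : Fin n → (B →₀ ℚ)) :
    (Fin n → B) →₀ ℚ :=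
  haveI := Classical.decEq B
  Finsupp.onFinset (Fintype.piFinset fun j => (f j).support)
    (fun w => ∏ j, f j (w j))
    (fun w hw => by
      rw [Fintype.mem_piFinset]
      intro j
      rw [Finsupp.mem_support_iff]
      intro h0
      exact hw (Finset.prod_eq_zero (Finset.mem_univ j) h0))

/-- `R(X,n)`: the vector space over `ℚ` with basis the set `(X*)^n` of `n`-tuples of elements
of the free semigroup `X*` on `X`. -/
abbrev RXn (X : Type*) (n : ℕ) : Type _ := (Fin n → FreeSemigroup X) →₀ ℚ

/-- `n`-ary intermolecular recombination: the `ℚ`-multilinear extension of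
`⟦a_1,…,a_n⟧ = Σ_{σ ∈ S_n} (a_{σ(1),1}, a_{σ(2),2}, …, a_{σ(n),n})` on basis elements. -/
noncomputable def recomb {X : Type*} {n : ℕ} (a : Fin n → RXn X n) : RXn X n :=
  ∑ σ : Equiv.Perm (Fin n),
    tensorPi fun j => Finsupp.mapDomain (fun w => w j) (a (σ j))

noncomputable def totH (α : Type*) : (α →₀ ℚ) →ₗ[ℚ] ℚ :=
  Finsupp.lsum ℚ fun _ => LinearMap.id

lemma totH_eq_sum {α : Type*} (u : α →₀ ℚ) : totH α u = u.sum fun _ r => r := by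
  simp [totH, Finsupp.sum]

noncomputable def prH {B : Type*} {n : ℕ} (k : Fin n) :
    ((Fin n → B) →₀ ℚ) →ₗ[ℚ] (B →₀ ℚ) :=
  Finsupp.lmapDomain ℚ ℚ (fun w => w k)

lemma prH_eq {B : Type*} {n : ℕ} (k : Fin n) (u : (Fin n → B) →₀ ℚ) :
    prH k u = Finsupp.mapDomain (fun w => w k) u := rfl

lemma tot_tensorPi {n : ℕ} {B : Type*} (f : Fin n → (B →₀ ℚ)) :
    totH _ (tensorPi f) = ∏ j, totH _ (f j) := by
  classical
  rw [totH_eq_sum]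
  unfold tensorPi
  rw [Finsupp.onFinset_sum _ (fun _ => rfl)]
  rw [← Finset.prod_univ_sum]
  exact Finset.prod_congr rfl fun j _ => ((totH_eq_sum (f j)).trans rfl).symm

lemma tot_prH {n : ℕ} {B : Type*} (k : Fin n) (u : (Fin n → B) →₀ ℚ) :
    totH _ (prH k u) = totH _ u := by
  rw [totH_eq_sum, prH_eq, Finsupp.sum_mapDomain_index (fun _ => rfl) (fun _ _ _ => rfl),
    totH_eq_sum]

lemma tensorPi_apply {n : ℕ} {B : Type*} (f : Fin n → (B →₀ ℚ)) (w : Fin n → B) :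
    tensorPi f w = ∏ j, f j (w j) := rfl

lemma pr_tensorPi {n : ℕ} {B : Type*} (k : Fin n) (f : Fin n → (B →₀ ℚ)) :
    prH k (tensorPi f) = (∏ j ∈ Finset.univ.erase k, totH _ (f j)) • f k := by
  classical
  ext x
  rw [prH_eq, Finsupp.mapDomain]
  unfold tensorPi
  rw [Finsupp.onFinset_sum _ (fun _ => by simp), Finsupp.finset_sum_apply]
  have key : ∀ w : Fin n → B, (Finsupp.single (w k) (∏ j, f j (w j))) x
      = ∏ j, (fun (j : Fin n) (b : B) => if j = k then (if b = x then f k x else 0) else f j b) j (w j) := by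
    intro w
    rw [Finsupp.single_apply]
    by_cases hw : w k = x
    · rw [if_pos hw, ← Finset.mul_prod_erase Finset.univ _ (Finset.mem_univ k),
        ← Finset.mul_prod_erase Finset.univ
          (fun j => (fun (j : Fin n) (b : B) => if j = k then (if b = x then f k x else 0) else f j b) j (w j))
          (Finset.mem_univ k)]
      beta_reduce
      congr 1
      · rw [if_pos rfl, if_pos hw, hw]
      · exact Finset.prod_congr rfl fun j hj => by
          rw [if_neg (Finset.mem_erase.mp hj).1]
    · rw [if_neg hw]
      symm
      refine Finset.prod_eq_zero (Finset.mem_univ k) ?_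
      beta_reduce
      rw [if_pos rfl, if_neg hw]
  rw [Finset.sum_congr rfl fun w _ => key w,
    ← Finset.prod_univ_sum (fun j => (f j).support)
      (fun (j : Fin n) (b : B) => if j = k then (if b = x then f k x else 0) else f j b)]
  rw [Finsupp.smul_apply, smul_eq_mul,
    ← Finset.mul_prod_erase Finset.univ _ (Finset.mem_univ k), mul_comm]
  beta_reduce
  have hk : ∑ b ∈ (f k).support, (if k = k then (if b = x then f k x else 0) else f k b)
      = f k x := by
    simp only [eq_self_iff_true, if_true]
    rw [Finset.sum_ite_eq' (f k).support x (fun _ => f k x)]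
    by_cases hx : x ∈ (f k).support
    · rw [if_pos hx]
    · rw [if_neg hx]; exact (Finsupp.notMem_support_iff.mp hx).symm
  have he : (∏ j ∈ Finset.univ.erase k,
        ∑ b ∈ (f j).support, (if j = k then (if b = x then f k x else 0) else f j b))
      = ∏ j ∈ Finset.univ.erase k, totH B (f j) := by
    refine Finset.prod_congr rfl fun j hj => ?_
    rw [totH_eq_sum]
    simp only [if_neg (Finset.mem_erase.mp hj).1]
    rfl
  rw [hk, he]

lemma tensorPi_update_apply {n : ℕ} {B : Type*} [DecidableEq B] (f : Fin n → (B →₀ ℚ))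
    (i : Fin n) (x : B →₀ ℚ) (w : Fin n → B) :
    tensorPi (Function.update f i x) w = x (w i) * ∏ j ∈ Finset.univ.erase i, f j (w j) := by
  rw [tensorPi_apply, ← Finset.mul_prod_erase Finset.univ _ (Finset.mem_univ i),
    Function.update_self]
  congr 1
  exact Finset.prod_congr rfl fun j hj => by
    rw [Function.update_of_ne (Finset.mem_erase.mp hj).1]

lemma tensorPi_update_add {n : ℕ} {B : Type*} (f : Fin n → (B →₀ ℚ))
    (i : Fin n) (x y : B →₀ ℚ) :
    tensorPi (Function.update f i (x + y))
      = tensorPi (Function.update f i x) + tensorPi (Function.update f i y) := by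
  classical
  ext w
  rw [Finsupp.add_apply, tensorPi_update_apply, tensorPi_update_apply, tensorPi_update_apply,
    Finsupp.add_apply, add_mul]

lemma tensorPi_update_smul {n : ℕ} {B : Type*} (f : Fin n → (B →₀ ℚ))
    (i : Fin n) (r : ℚ) (x : B →₀ ℚ) :
    tensorPi (Function.update f i (r • x)) = r • tensorPi (Function.update f i x) := by
  classical
  ext w
  rw [Finsupp.smul_apply, tensorPi_update_apply, tensorPi_update_apply,
    Finsupp.smul_apply, smul_eq_mul, smul_eq_mul, mul_assoc]

lemma tensorPi_eq_zero {n : ℕ} {B : Type*} (f : Fin n → (B →₀ ℚ)) (i : Fin n)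
    (h : f i = 0) : tensorPi f = 0 := by
  ext w
  rw [tensorPi_apply, Finsupp.coe_zero, Pi.zero_apply]
  exact Finset.prod_eq_zero (Finset.mem_univ i) (by rw [h]; rfl)

/-- Ternary intermolecular recombination `⟦a,b,c⟧` on `R(X,3)`. -/
noncomputable def op3 {X : Type*} (a b c : RXn X 3) : RXn X 3 :=
  recomb ![a, b, c]

lemma op3_def {X : Type*} (a b c : RXn X 3) :
    op3 a b c = ∑ σ : Equiv.Perm (Fin 3), tensorPi fun j => prH j (![a, b, c] (σ j)) := rfl

lemma cons_ne_zero_eq {X : Type*} (u v b d : RXn X 3) (i : Fin 3) (h : i ≠ 0) :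
    ![u, b, d] i = ![v, b, d] i := by
  fin_cases i
  · exact absurd rfl h
  · rfl
  · rfl

lemma slot_eq {X : Type*} (σ : Equiv.Perm (Fin 3)) (u v b d : RXn X 3) :
    (fun j => prH j (![u, b, d] (σ j)))
      = Function.update (fun j => prH j (![v, b, d] (σ j))) (σ⁻¹ 0) (prH (σ⁻¹ 0) u) := by
  funext j
  by_cases h : j = σ⁻¹ 0
  · subst h
    rw [Function.update_self]
    have : σ (σ⁻¹ 0) = 0 := Equiv.apply_symm_apply σ 0
    rw [this]
    rfl
  · rw [Function.update_of_ne h]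
    have hσ : σ j ≠ 0 := fun hh => h (by rw [← hh, Equiv.Perm.coe_inv, Equiv.symm_apply_apply σ j])
    rw [cons_ne_zero_eq u v b d (σ j) hσ]

lemma op3_add_left {X : Type*} (u v b d : RXn X 3) :
    op3 (u + v) b d = op3 u b d + op3 v b d := by
  rw [op3_def, op3_def, op3_def, ← Finset.sum_add_distrib]
  refine Finset.sum_congr rfl fun σ _ => ?_
  rw [slot_eq σ (u + v) u b d, map_add, tensorPi_update_add]
  congr 1
  · have h0 : prH (σ⁻¹ 0) u = (fun j => prH j (![u, b, d] (σ j))) (σ⁻¹ 0) := by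
      have : σ (σ⁻¹ 0) = 0 := Equiv.apply_symm_apply σ 0
      simp only [this]
      rfl
    rw [h0, Function.update_eq_self]
  · rw [← slot_eq σ v u b d]

lemma op3_smul_left {X : Type*} (r : ℚ) (u b d : RXn X 3) :
    op3 (r • u) b d = r • op3 u b d := by
  rw [op3_def, op3_def, Finset.smul_sum]
  refine Finset.sum_congr rfl fun σ _ => ?_
  rw [slot_eq σ (r • u) u b d, map_smul, tensorPi_update_smul]
  congr 1
  have h0 : prH (σ⁻¹ 0) u = (fun j => prH j (![u, b, d] (σ j))) (σ⁻¹ 0) := by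
    have : σ (σ⁻¹ 0) = 0 := Equiv.apply_symm_apply σ 0
    simp only [this]
    rfl
  rw [h0, Function.update_eq_self]

lemma op3_sub_left {X : Type*} (u v b d : RXn X 3) :
    op3 (u - v) b d = op3 u b d - op3 v b d := by
  have h := op3_add_left u ((-1 : ℚ) • v) b d
  rw [op3_smul_left, neg_one_smul, neg_one_smul, ← sub_eq_add_neg, ← sub_eq_add_neg] at h
  exact h

lemma op3_left_eq_zero {X : Type*} (u b d : RXn X 3) (h : ∀ k, prH k u = 0) :
    op3 u b d = 0 := by
  rw [op3_def]
  refine Finset.sum_eq_zero fun σ _ => tensorPi_eq_zero _ (σ⁻¹ 0) ?_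
  have h0 : σ (σ⁻¹ 0) = 0 := Equiv.apply_symm_apply σ 0
  show prH (σ⁻¹ 0) (![u, b, d] (σ (σ⁻¹ 0))) = 0
  rw [h0]
  exact h _

lemma tot_op3 {X : Type*} (a b c : RXn X 3) :
    totH _ (op3 a b c) = 6 * (totH _ a * totH _ b * totH _ c) := by
  rw [op3_def, map_sum]
  have step : ∀ σ : Equiv.Perm (Fin 3),
      totH _ (tensorPi fun j => prH j (![a, b, c] (σ j)))
        = totH _ a * totH _ b * totH _ c := by
    intro σ
    rw [tot_tensorPi]
    have h1 : ∀ j : Fin 3, totH _ (prH j (![a, b, c] (σ j))) = totH _ (![a, b, c] (σ j)) :=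
      fun j => tot_prH j _
    rw [Finset.prod_congr rfl fun j _ => h1 j,
      Equiv.prod_comp σ (fun i => totH _ (![a, b, c] i)), Fin.prod_univ_three]
    simp
  rw [Finset.sum_congr rfl fun σ _ => step σ, Finset.sum_const, Finset.card_univ]
  rw [Fintype.card_perm, Fintype.card_fin]
  norm_num [Nat.factorial, nsmul_eq_mul]

lemma perm_fiber_card : ∀ k i : Fin 3,
    (Finset.univ.filter fun σ : Equiv.Perm (Fin 3) => σ k = i).card = 2 := by decide

lemma erase0 : (Finset.univ : Finset (Fin 3)).erase 0 = {1, 2} := by decide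
lemma erase1 : (Finset.univ : Finset (Fin 3)).erase 1 = {0, 2} := by decide
lemma erase2 : (Finset.univ : Finset (Fin 3)).erase 2 = {0, 1} := by decide

lemma pr_op3 {X : Type*} (k : Fin 3) (a₀ a₁ a₂ : RXn X 3) :
    prH k (op3 a₀ a₁ a₂)
      = (2 : ℚ) • ((totH _ a₁ * totH _ a₂) • prH k a₀
          + (totH _ a₀ * totH _ a₂) • prH k a₁
          + (totH _ a₀ * totH _ a₁) • prH k a₂) := by
  classical
  rw [op3_def, map_sum]
  have step : ∀ σ : Equiv.Perm (Fin 3),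
      prH k (tensorPi fun j => prH j (![a₀, a₁, a₂] (σ j)))
        = (fun i => (∏ i' ∈ Finset.univ.erase i, totH _ (![a₀, a₁, a₂] i'))
            • prH k (![a₀, a₁, a₂] i)) (σ k) := by
    intro σ
    rw [pr_tensorPi]
    beta_reduce
    congr 1
    rw [Finset.prod_congr rfl fun j _ => tot_prH j (![a₀, a₁, a₂] (σ j))]
    refine Finset.prod_bij' (fun j _ => σ j) (fun i _ => σ⁻¹ i) ?_ ?_ ?_ ?_ ?_
    · intro j hj
      rcases Finset.mem_erase.mp hj with ⟨hj1, _⟩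
      exact Finset.mem_erase.mpr ⟨fun hh => hj1 (σ.injective hh), Finset.mem_univ _⟩
    · intro i hi
      rcases Finset.mem_erase.mp hi with ⟨hi1, _⟩
      refine Finset.mem_erase.mpr ⟨fun hh => hi1 ?_, Finset.mem_univ _⟩
      rw [← hh, Equiv.Perm.coe_inv, Equiv.apply_symm_apply]
    · intro j _; exact Equiv.symm_apply_apply σ j
    · intro i _; exact Equiv.apply_symm_apply σ i
    · intro j _; rfl
  rw [Finset.sum_congr rfl fun σ _ => step σ,
    Finset.sum_comp (fun i => (∏ i' ∈ Finset.univ.erase i, totH _ (![a₀, a₁, a₂] i'))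
      • prH k (![a₀, a₁, a₂] i)) (fun σ : Equiv.Perm (Fin 3) => σ k)]
  have himg : Finset.image (fun σ : Equiv.Perm (Fin 3) => σ k) Finset.univ = Finset.univ :=
    Finset.eq_univ_of_forall fun i =>
      Finset.mem_image.mpr ⟨Equiv.swap k i, Finset.mem_univ _, Equiv.swap_apply_left k i⟩
  rw [himg, Finset.sum_congr rfl fun i _ => by rw [perm_fiber_card k i]]
  rw [Fin.sum_univ_three, erase0, erase1, erase2]
  have p0 : (∏ i' ∈ ({1, 2} : Finset (Fin 3)), totH _ (![a₀, a₁, a₂] i'))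
      = totH _ a₁ * totH _ a₂ := by
    rw [Finset.prod_insert (by decide), Finset.prod_singleton]; rfl
  have p1 : (∏ i' ∈ ({0, 2} : Finset (Fin 3)), totH _ (![a₀, a₁, a₂] i'))
      = totH _ a₀ * totH _ a₂ := by
    rw [Finset.prod_insert (by decide), Finset.prod_singleton]; rfl
  have p2 : (∏ i' ∈ ({0, 1} : Finset (Fin 3)), totH _ (![a₀, a₁, a₂] i'))
      = totH _ a₀ * totH _ a₁ := by
    rw [Finset.prod_insert (by decide), Finset.prod_singleton]; rfl
  rw [p0, p1, p2]
  simp only [Matrix.cons_val_zero, Matrix.cons_val_one, Matrix.head_cons,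
    Matrix.cons_val_two, Matrix.tail_cons]
  module

/-- ternary intermolecular recombination satisfies the identity `P`. -/
theorem ternary_identity_P {X : Type*} [Fintype X] [Nonempty X]
    (a b c d e f g : RXn X 3) :
    op3 (op3 (op3 a c f) e g) b d
      - op3 (op3 (op3 a c g) e f) b d
      - op3 (op3 (op3 c e f) a g) b d
      + op3 (op3 (op3 c e g) a f) b d = 0 := by
  rw [← op3_sub_left, ← op3_sub_left, ← op3_add_left]
  refine op3_left_eq_zero _ b d fun k => ?_
  rw [map_add, map_sub, map_sub,
    pr_op3 k (op3 a c f) e g, pr_op3 k (op3 a c g) e f,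
    pr_op3 k (op3 c e f) a g, pr_op3 k (op3 c e g) a f,
    pr_op3 k a c f, pr_op3 k a c g, pr_op3 k c e f, pr_op3 k c e g,
    tot_op3 a c f, tot_op3 a c g, tot_op3 c e f, tot_op3 c e g]
  module
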